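/- Cramer's formula for Manin matrices: let M be an n×n Manin matrix over an associative unital (possibly noncommutative) ring R, and let M^adj be its adjugate defined by (M^adj)_{kl} = (−1)^{k+l}·det^col(M̂_{lk}), where M̂_{lk} is the (n−1)×(n−1) submatrix of M obtained by deleting row l and column k. Then M^adj · M = det^col(M) · 1_n. Moreover, if instead the transpose Mᵀ is a Manin matrix and one defines the adjugate using row determinants of the minors, then M · M^adj = det^row(M) · 1_n (and det^row(M) = det^col(Mᵀ)). -/

import Mathlib

open scoped BigOperators

/-- A matrix `M` over a (possibly noncommutative) ring is a *Manin matrix* if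
entries of the same column commute and cross-commutators of 2×2 submatrices are equal. -/
def Matrix.IsManin {R : Type*} [Ring R] {n m : ℕ} (M : Matrix (Fin n) (Fin m) R) : Prop :=
  (∀ i k : Fin n, ∀ j : Fin m, M i j * M k j = M k j * M i j) ∧
  (∀ i k : Fin n, ∀ j l : Fin m,
    M i j * M k l - M k l * M i j = M k j * M i l - M i l * M k j)

/-- Column determinant: factors multiplied in order of increasing column index. -/
noncomputable def Matrix.detCol {R : Type*} [Ring R] {n : ℕ}
    (M : Matrix (Fin n) (Fin n) R) : R :=
  ∑ σ : Equiv.Perm (Fin n),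
    (Equiv.Perm.sign σ : ℤ) • ((List.finRange n).map (fun i => M (σ i) i)).prod

/-- Row determinant: factors multiplied in order of increasing row index. -/
noncomputable def Matrix.detRow {R : Type*} [Ring R] {n : ℕ}
    (M : Matrix (Fin n) (Fin n) R) : R :=
  ∑ σ : Equiv.Perm (Fin n),
    (Equiv.Perm.sign σ : ℤ) • ((List.finRange n).map (fun i => M i (σ i))).prod

/-- Row permanent: factors multiplied in order of increasing row index. -/
noncomputable def Matrix.permRow {R : Type*} [Ring R] {n : ℕ}
    (M : Matrix (Fin n) (Fin n) R) : R :=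
  ∑ σ : Equiv.Perm (Fin n), ((List.finRange n).map (fun i => M i (σ i))).prod

/-- The adjugate of `M` built from column determinants of minors:
`(adjCol M) k l = (-1)^(k+l) * detCol` of `M` with row `l` and column `k` deleted. -/
noncomputable def Matrix.adjCol {R : Type*} [Ring R] {n : ℕ}
    (M : Matrix (Fin (n + 1)) (Fin (n + 1)) R) : Matrix (Fin (n + 1)) (Fin (n + 1)) R :=
  Matrix.of fun k l => (-1 : R) ^ ((k : ℕ) + (l : ℕ)) *
    (M.submatrix l.succAbove k.succAbove).detCol

/-- The adjugate of `M` built from row determinants of minors. -/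
noncomputable def Matrix.adjRow {R : Type*} [Ring R] {n : ℕ}
    (M : Matrix (Fin (n + 1)) (Fin (n + 1)) R) : Matrix (Fin (n + 1)) (Fin (n + 1)) R :=
  Matrix.of fun k l => (-1 : R) ^ ((k : ℕ) + (l : ℕ)) *
    (M.submatrix l.succAbove k.succAbove).detRow

/-!
Expanding `detCol` along its last column, whose entries stand rightmost in every product, shows
that the entry `(k, j)` of `M.adjCol * M` is `±` the column determinant of `M` with column `k`
deleted and column `j` appended last. For a Manin matrix the column determinant changes sign under
an adjacent transposition of columns (this is the cross-commutator relation) and vanishes when two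
adjacent columns coincide (entries of a column commute). Every matrix whose columns are columns of
a Manin matrix is again Manin, and adjacent transpositions generate the symmetric group, so the
column determinant picks up `sign σ` under any permutation `σ` of the columns and vanishes on a
repeated column. This gives `detCol M` on the diagonal and `0` off it.

The row statement is the column statement for the matrix over `Rᵐᵒᵖ` reflected in the
anti-diagonal: this reflection reverses products, turns `detRow` into `detCol`, and a matrix with
Manin transpose into a Manin matrix.
-/

open Equiv Equiv.Perm

theorem Equiv.Perm.sum_eq_zero_of_add_mul_swap {α M : Type*} [DecidableEq α] [Fintype α]
    [AddCommMonoid M] {p q : α} (hpq : p ≠ q) {F : Perm α → M}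
    (hF : ∀ σ, F σ + F (σ * swap p q) = 0) : ∑ σ, F σ = 0 :=
  Finset.sum_involution (fun σ _ => σ * swap p q) (fun σ _ => hF σ)
    (fun σ _ _ => by rwa [Ne, mul_swap_eq_iff]) (fun _ _ => Finset.mem_univ _)
    (fun σ _ => mul_swap_involutive p q σ)

theorem Equiv.Perm.exists_apply_eq_and_apply_eq {α : Type*} [DecidableEq α] {p q a b : α}
    (hpq : p ≠ q) (hab : a ≠ b) : ∃ σ : Perm α, σ p = a ∧ σ q = b := by
  refine ⟨swap a p * swap q (swap a p b), ?_, ?_⟩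
  · have hp : p ≠ swap a p b := fun h => hab (by simpa using congrArg (swap a p) h)
    simp [swap_apply_of_ne_of_ne hpq hp]
  · simp

theorem Equiv.Perm.sign_mul_swap_smul {α M : Type*} [DecidableEq α] [Fintype α] [AddGroup M]
    (σ : Perm α) {p q : α} (hpq : p ≠ q) (x : M) :
    (sign (σ * swap p q) : ℤ) • x = -((sign σ : ℤ) • x) := by
  rw [Perm.sign_mul, sign_swap hpq, mul_neg_one, Units.val_neg, neg_zsmul]

theorem List.exists_prod_map_finRange_eq {M : Type*} [Monoid M] {n : ℕ} (i : Fin n)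
    (g : Fin (n + 1) → M) :
    ∃ X Y : M, ∀ g' : Fin (n + 1) → M, (∀ x, x ≠ i.castSucc → x ≠ i.succ → g' x = g x) →
      ((List.finRange (n + 1)).map g').prod = X * (g' i.castSucc * g' i.succ) * Y := by
  obtain ⟨l₁, l₂, hl⟩ : ∃ l₁ l₂, List.finRange (n + 1) = l₁ ++ i.castSucc :: i.succ :: l₂ := by
    refine ⟨(List.finRange (n + 1)).take i, (List.finRange (n + 1)).drop (i + 2), ?_⟩
    conv_lhs => rw [← List.take_append_drop i (List.finRange (n + 1))]
    rw [List.drop_eq_getElem_cons (by simp), List.drop_eq_getElem_cons (by simp)]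
    simp [Fin.ext_iff]
  have hnd := hl ▸ List.nodup_finRange (n + 1)
  simp only [List.nodup_append, List.nodup_cons, List.mem_cons, not_or] at hnd
  obtain ⟨-, ⟨⟨-, hp₂⟩, hq₂, -⟩, h₁⟩ := hnd
  refine ⟨(l₁.map g).prod, (l₂.map g).prod, fun g' hg' => ?_⟩
  have key : ∀ l : List (Fin (n + 1)), (∀ x ∈ l, x ≠ i.castSucc ∧ x ≠ i.succ) →
      (l.map g').prod = (l.map g).prod := fun l h =>
    congrArg List.prod (List.map_congr_left fun x hx => hg' x (h x hx).1 (h x hx).2)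
  rw [hl, List.map_append, List.prod_append, List.map_cons, List.map_cons, List.prod_cons,
    List.prod_cons, mul_assoc, mul_assoc,
    key l₁ (fun x hx => ⟨h₁ x hx _ (Or.inl rfl), h₁ x hx _ (Or.inr (Or.inl rfl))⟩),
    key l₂ (fun x hx => ⟨fun h => hp₂ (h ▸ hx), fun h => hq₂ (h ▸ hx)⟩)]

namespace Fin

variable {n : ℕ}

def succAbovePerm (l : Fin (n + 1)) (τ : Perm (Fin n)) : Perm (Fin (n + 1)) :=
  (finSuccEquiv' (last n)).trans ((optionCongr τ).trans (finSuccEquiv' l).symm)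

@[simp]
theorem succAbovePerm_castSucc (l : Fin (n + 1)) (τ : Perm (Fin n)) (i : Fin n) :
    succAbovePerm l τ i.castSucc = l.succAbove (τ i) := by
  simp [succAbovePerm, finSuccEquiv'_last_apply_castSucc]

@[simp]
theorem succAbovePerm_last (l : Fin (n + 1)) (τ : Perm (Fin n)) :
    succAbovePerm l τ (last n) = l := by
  simp [succAbovePerm]

theorem succAbovePerm_eq_cycleIcc_mul (l : Fin (n + 1)) (τ : Perm (Fin n)) :
    succAbovePerm l τ = l.cycleIcc (last n) * succAbovePerm (last n) τ := by
  ext x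
  induction x using lastCases with
  | last => simp [cycleIcc_of_last (le_last l)]
  | cast i =>
    simp [← congrFun (cycleIcc_comp_succAbove l (last n) (le_last l)), succAbove_last]

theorem sign_succAbovePerm (l : Fin (n + 1)) (τ : Perm (Fin n)) :
    sign (succAbovePerm l τ) = (-1) ^ (n - (l : ℕ)) * sign τ := by
  rw [succAbovePerm_eq_cycleIcc_mul, Perm.sign_mul, sign_cycleIcc_of_le (le_last l), val_last]
  exact congrArg _ ((sign_permCongr (finSuccEquiv' (last n)).symm _).trans (optionCongr_sign τ))

theorem bijective_succAbovePerm :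
    Function.Bijective fun x : Fin (n + 1) × Perm (Fin n) => succAbovePerm x.1 x.2 := by
  rw [Fintype.bijective_iff_injective_and_card]
  refine ⟨fun ⟨l, τ⟩ ⟨l', τ'⟩ h => ?_, by simp [Fintype.card_perm, Nat.factorial_succ]⟩
  dsimp only at h
  obtain rfl : l = l' := by rw [← succAbovePerm_last l τ, ← succAbovePerm_last l' τ', h]
  refine Prod.ext rfl (Equiv.ext fun i => succAbove_right_injective (p := l) ?_)
  simpa using DFunLike.congr_fun h i.castSucc

end Fin

namespace Matrix

variable {R : Type*} [Ring R]

theorem IsManin.submatrix {n m n' m' : ℕ} {M : Matrix (Fin n) (Fin m) R} (hM : M.IsManin)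
    (f : Fin n' → Fin n) (g : Fin m' → Fin m) : (M.submatrix f g).IsManin :=
  ⟨fun i k j => hM.1 (f i) (f k) (g j), fun i k j l => hM.2 (f i) (f k) (g j) (g l)⟩

theorem IsManin.map_op {n m : ℕ} {M : Matrix (Fin n) (Fin m) R} (hM : M.IsManin) :
    (M.map MulOpposite.op).IsManin := by
  refine ⟨fun i k j => ?_, fun i k j l => ?_⟩
  · simp only [map_apply, ← MulOpposite.op_mul, hM.1 k i j]
  · simp only [map_apply, ← MulOpposite.op_mul, ← MulOpposite.op_sub, hM.2 k i l j]

section adjacent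

variable {n : ℕ} {A : Matrix (Fin (n + 1)) (Fin (n + 1)) R}

theorem IsManin.detCol_submatrix_swap (hA : A.IsManin) (i : Fin n) :
    (A.submatrix id (Equiv.swap i.castSucc i.succ)).detCol = -A.detCol := by
  have hpq := (Fin.castSucc_lt_succ (i := i)).ne
  rw [eq_neg_iff_add_eq_zero, detCol, detCol, ← Finset.sum_add_distrib]
  refine sum_eq_zero_of_add_mul_swap hpq fun σ => ?_
  obtain ⟨X, Y, hXY⟩ := List.exists_prod_map_finRange_eq i fun x => A (σ x) x
  have hs : ∀ x, x ≠ i.castSucc → x ≠ i.succ → Equiv.swap i.castSucc i.succ x = x :=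
    fun x h₁ h₂ => swap_apply_of_ne_of_ne h₁ h₂
  simp only [submatrix_apply, id_eq, sign_mul_swap_smul _ hpq]
  rw [hXY _ fun x h₁ h₂ => by rw [hs x h₁ h₂], hXY _ fun _ _ _ => rfl,
    hXY _ fun x h₁ h₂ => by rw [hs x h₁ h₂, Perm.mul_apply, hs x h₁ h₂],
    hXY _ fun x h₁ h₂ => by rw [Perm.mul_apply, hs x h₁ h₂]]
  simp only [Perm.mul_apply, swap_apply_left, swap_apply_right]
  have hcross := hA.2 (σ i.castSucc) (σ i.succ) i.succ i.castSucc
  rw [sub_eq_sub_iff_add_eq_add] at hcross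
  rw [← neg_add, ← sub_eq_add_neg, ← smul_add, ← smul_add, ← smul_sub]
  simp only [← add_mul, ← mul_add, hcross, sub_self, smul_zero]

theorem IsManin.detCol_eq_zero_of_col_castSucc_eq_succ (hA : A.IsManin) (i : Fin n)
    (h : ∀ r, A r i.castSucc = A r i.succ) : A.detCol = 0 := by
  have hpq := (Fin.castSucc_lt_succ (i := i)).ne
  refine sum_eq_zero_of_add_mul_swap hpq fun σ => ?_
  obtain ⟨X, Y, hXY⟩ := List.exists_prod_map_finRange_eq i fun x => A (σ x) x
  rw [sign_mul_swap_smul _ hpq, hXY _ fun _ _ _ => rfl,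
    hXY _ fun x h₁ h₂ => by rw [Perm.mul_apply, swap_apply_of_ne_of_ne h₁ h₂]]
  simp only [Perm.mul_apply, swap_apply_left, swap_apply_right, ← h,
    hA.1 (σ i.castSucc) (σ i.succ), add_neg_cancel]

end adjacent

section perm

variable {N : ℕ} {A : Matrix (Fin N) (Fin N) R}

theorem IsManin.detCol_submatrix_perm (hA : A.IsManin) (σ : Perm (Fin N)) :
    (A.submatrix id σ).detCol = (sign σ : ℤ) • A.detCol := by
  obtain _ | n := N
  · rw [Subsingleton.elim σ 1, coe_one, submatrix_id_id, Perm.sign_one, Units.val_one, one_smul]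
  have hσ : σ ∈ Submonoid.closure (Set.range fun i : Fin n => Equiv.swap i.castSucc i.succ) :=
    mclosure_swap_castSucc_succ n ▸ Submonoid.mem_top σ
  induction hσ using Submonoid.closure_induction generalizing A with
  | mem τ hτ =>
    obtain ⟨i, rfl⟩ := hτ
    rw [hA.detCol_submatrix_swap, sign_swap (Fin.castSucc_lt_succ (i := i)).ne, Units.val_neg,
      Units.val_one, neg_one_zsmul]
  | one => rw [coe_one, submatrix_id_id, Perm.sign_one, Units.val_one, one_smul]
  | mul τ ρ _ _ hτ hρ =>
    rw [coe_mul, ← Function.id_comp id, ← submatrix_submatrix, hρ (hA.submatrix id τ), hτ hA,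
      smul_smul, Perm.sign_mul, Units.val_mul, mul_comm]

theorem IsManin.detCol_eq_zero_of_col_eq (hA : A.IsManin) {a b : Fin N} (hab : a ≠ b)
    (h : ∀ r, A r a = A r b) : A.detCol = 0 := by
  obtain _ | _ | n := N
  · exact a.elim0
  · exact absurd (Subsingleton.elim (α := Fin 1) a b) hab
  obtain ⟨σ, hσa, hσb⟩ := exists_apply_eq_and_apply_eq (Fin.castSucc_lt_succ (i := 0)).ne hab
  have h0 := (hA.submatrix id σ).detCol_eq_zero_of_col_castSucc_eq_succ 0
    fun r => by simpa only [submatrix_apply, id_eq, hσa, hσb] using h r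
  rw [hA.detCol_submatrix_perm] at h0
  rcases Int.units_eq_one_or (sign σ) with hs | hs <;> simpa [hs] using h0

end perm

section laplace

variable {n : ℕ}

theorem detCol_succ_column_last (A : Matrix (Fin (n + 1)) (Fin (n + 1)) R) :
    A.detCol = ∑ l : Fin (n + 1), (-1 : R) ^ ((l : ℕ) + n) *
      (A.submatrix l.succAbove Fin.castSucc).detCol * A l (Fin.last n) := by
  rw [detCol, ← Fintype.sum_bijective _ Fin.bijective_succAbovePerm _ _ fun _ => rfl,
    Fintype.sum_prod_type]
  refine Finset.sum_congr rfl fun l _ => ?_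
  rw [detCol, Finset.mul_sum, Finset.sum_mul]
  refine Finset.sum_congr rfl fun τ _ => ?_
  have hsign : (-1 : R) ^ ((l : ℕ) + n) = (-1) ^ (n - (l : ℕ)) := by
    rw [neg_one_pow_eq_pow_mod_two, neg_one_pow_eq_pow_mod_two (n - l)]
    congr 1
    omega
  rw [List.finRange_succ_last, List.map_append, List.prod_append, List.map_map]
  simp [Function.comp_def, Fin.sign_succAbovePerm, hsign, zsmul_eq_mul, mul_assoc]

theorem adjCol_mul_apply (M : Matrix (Fin (n + 1)) (Fin (n + 1)) R) (k j : Fin (n + 1)) :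
    (M.adjCol * M) k j = (-1 : R) ^ ((k : ℕ) + n) *
      (M.submatrix id (Fin.lastCases j k.succAbove : Fin (n + 1) → Fin (n + 1))).detCol := by
  rw [mul_apply, detCol_succ_column_last, Finset.mul_sum]
  refine Finset.sum_congr rfl fun l _ => ?_
  have hsign : (-1 : R) ^ ((k : ℕ) + l) = (-1) ^ ((k : ℕ) + n) * (-1) ^ ((l : ℕ) + n) := by
    rw [← pow_add, neg_one_pow_eq_pow_mod_two, neg_one_pow_eq_pow_mod_two (_ + _)]
    congr 1
    omega
  simp [adjCol, hsign, mul_assoc, submatrix_submatrix, Function.comp_def]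

theorem IsManin.adjCol_mul {M : Matrix (Fin (n + 1)) (Fin (n + 1)) R} (hM : M.IsManin) :
    M.adjCol * M = M.detCol • (1 : Matrix (Fin (n + 1)) (Fin (n + 1)) R) := by
  ext k j
  rw [adjCol_mul_apply, smul_apply, one_apply, smul_eq_mul]
  split_ifs with hkj
  · subst hkj
    have hperm : (Fin.lastCases k k.succAbove : Fin (n + 1) → Fin (n + 1)) =
        Fin.succAbovePerm k 1 := by
      funext x
      induction x using Fin.lastCases <;> simp
    have hsign : (-1 : R) ^ ((k : ℕ) + n) * (-1) ^ (n - (k : ℕ)) = 1 := by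
      rw [← pow_add, Even.neg_one_pow ⟨n, by omega⟩]
    rw [hperm, hM.detCol_submatrix_perm, Fin.sign_succAbovePerm, Perm.sign_one, mul_one,
      zsmul_eq_mul, ← mul_assoc, mul_one]
    push_cast
    rw [hsign, one_mul]
  · obtain ⟨i, rfl⟩ := Fin.exists_succAbove_eq (Ne.symm hkj)
    rw [(hM.submatrix _ _).detCol_eq_zero_of_col_eq (Fin.castSucc_lt_last i).ne
      fun r => by simp, mul_zero, mul_zero]

end laplace

section opAntiTranspose

open MulOpposite

variable {α : Type*} {l m n : ℕ}

def opAntiTranspose (A : Matrix (Fin m) (Fin n) α) :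
    Matrix (Fin n) (Fin m) αᵐᵒᵖ :=
  (Aᵀ.map op).submatrix Fin.rev Fin.rev

@[simp]
theorem opAntiTranspose_apply (A : Matrix (Fin m) (Fin n) α) (i : Fin n) (j : Fin m) :
    opAntiTranspose A i j = op (A j.rev i.rev) := rfl

theorem opAntiTranspose_injective :
    Function.Injective (opAntiTranspose : Matrix (Fin m) (Fin n) α → _) := fun A B h =>
  ext fun i j => by simpa using congrFun₂ h j.rev i.rev

theorem opAntiTranspose_mul [Mul α] [AddCommMonoid α] (A : Matrix (Fin l) (Fin m) α)
    (B : Matrix (Fin m) (Fin n) α) :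
    opAntiTranspose (A * B) = opAntiTranspose B * opAntiTranspose A := by
  ext i j
  simp only [opAntiTranspose_apply, mul_apply, Finset.op_sum, op_mul]
  exact Fintype.sum_equiv Fin.revPerm _ _ fun x => by simp

theorem opAntiTranspose_smul_one [Semiring α] (c : α) :
    opAntiTranspose (c • (1 : Matrix (Fin n) (Fin n) α)) = op c • 1 := by
  ext i j
  by_cases h : i = j <;> simp [h, eq_comm]

theorem opAntiTranspose_submatrix_succAbove (A : Matrix (Fin (m + 1)) (Fin (n + 1)) α)
    (a : Fin (n + 1)) (b : Fin (m + 1)) :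
    (opAntiTranspose A).submatrix a.succAbove b.succAbove =
      opAntiTranspose (A.submatrix b.rev.succAbove a.rev.succAbove) := by
  ext
  simp [Fin.rev_succAbove]

theorem IsManin.opAntiTranspose {A : Matrix (Fin m) (Fin n) R} (hA : Aᵀ.IsManin) :
    (opAntiTranspose A).IsManin :=
  hA.map_op.submatrix Fin.rev Fin.rev

theorem detCol_opAntiTranspose (A : Matrix (Fin n) (Fin n) R) :
    (opAntiTranspose A).detCol = op A.detRow := by
  rw [detCol, detRow, Finset.op_sum]
  refine Fintype.sum_equiv (Fin.revPerm.permCongr) _ _ fun σ => ?_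
  rw [sign_permCongr, op_smul, op_list_prod, List.map_map, ← List.map_reverse,
    List.finRange_reverse, List.map_map]
  refine congrArg _ (congrArg List.prod (List.map_congr_left fun i _ => ?_))
  simp

theorem opAntiTranspose_adjRow (A : Matrix (Fin (n + 1)) (Fin (n + 1)) R) :
    opAntiTranspose A.adjRow = (opAntiTranspose A).adjCol := by
  ext i j
  rw [opAntiTranspose_apply, adjRow, adjCol, of_apply, of_apply,
    opAntiTranspose_submatrix_succAbove, detCol_opAntiTranspose, op_mul]
  have hsign : op ((-1 : R) ^ ((j.rev : ℕ) + i.rev)) = (-1) ^ ((i : ℕ) + j) := by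
    rw [op_pow, op_neg, op_one, neg_one_pow_eq_pow_mod_two, neg_one_pow_eq_pow_mod_two (_ + _)]
    congr 1
    simp only [Fin.val_rev]
    omega
  rw [hsign]
  exact ((Commute.neg_one_left _).pow_left _).eq.symm

theorem mul_adjRow_of_isManin_transpose {M : Matrix (Fin (n + 1)) (Fin (n + 1)) R}
    (hM : Mᵀ.IsManin) : M * M.adjRow = M.detRow • (1 : Matrix (Fin (n + 1)) (Fin (n + 1)) R) :=
  opAntiTranspose_injective <| by
    rw [opAntiTranspose_mul, opAntiTranspose_adjRow, hM.opAntiTranspose.adjCol_mul,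
      detCol_opAntiTranspose, opAntiTranspose_smul_one]

end opAntiTranspose

end Matrix

/-- Cramer's formula for Manin matrices: if `M` is a Manin matrix then
`M.adjCol * M = detCol M • 1`; moreover if instead `Mᵀ` is a Manin matrix then
`M * M.adjRow = detRow M • 1` and `detRow M = detCol Mᵀ`. -/
theorem cramer_manin {R : Type*} [Ring R] {n : ℕ}
    (M : Matrix (Fin (n + 1)) (Fin (n + 1)) R) :
    (M.IsManin →
      M.adjCol * M = M.detCol • (1 : Matrix (Fin (n + 1)) (Fin (n + 1)) R)) ∧
    (M.transpose.IsManin →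
      M * M.adjRow = M.detRow • (1 : Matrix (Fin (n + 1)) (Fin (n + 1)) R) ∧
      M.detRow = M.transpose.detCol) :=
  ⟨fun hM => hM.adjCol_mul, fun hM => ⟨Matrix.mul_adjRow_of_isManin_transpose hM, rfl⟩⟩
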